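/- Let z = (F ←γ G →μ F*, θ̄) be a regular ε-quadratic split preformation over ℤ with μ injective and coker(μ) finite. Then the linking pairing λ_μ : coker(μ) × coker(μ) → ℚ/ℤ given by λ_μ([x], [y]) = (1/s)·γ*(x)(g) mod ℤ, where g ∈ G and s ∈ ℤ∖{0} satisfy s·y = μ(g), is well-defined: it is independent of the choice of representatives x, y ∈ F* and of the choice of (s, g), and it is (−ε)-symmetric: λ_μ([x],[y]) = −ε·λ_μ([y],[x]) in ℚ/ℤ. -/

import Mathlib

/-! Whenever `s • y = μ g`, the functional `μ g` is `s • y`, so the `(−ε)`-symmetry of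
`(g, h) ↦ μ g (γ h)` changes `x (γ g)` by a multiple of `s` when `x` moves by `μ k`, and gives
`t · x (γ g) = −ε · s · y (γ h)` when also `t • x = μ h`. Moving `y` by `μ l` is handled by
injectivity of `μ`, which forces `s' • g = s • g' + (s s') • l`. -/

open QuotientAddGroup

theorem mk_eq_mk_of_sub_eq_intCast {a b : ℚ} (c : ℤ) (h : a - b = c) :
    (mk a : ℚ ⧸ AddSubgroup.zmultiples (1 : ℚ)) = mk b :=
  QuotientAddGroup.eq_iff_sub_mem.2 (h ▸ AddSubgroup.intCast_mem_zmultiples_one c)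

theorem Submodule.exists_ne_zero_zsmul_mem_of_finite_quotient {M : Type*} [AddCommGroup M]
    [Module ℤ M] (N : Submodule ℤ M) [Finite (M ⧸ N)] (y : M) :
    ∃ s : ℤ, s ≠ 0 ∧ s • y ∈ N := by
  obtain ⟨n, hn, hny⟩ := (isOfFinAddOrder_of_finite (N.mkQ y)).exists_nsmul_eq_zero
  refine ⟨n, by exact_mod_cast hn.ne', ?_⟩
  rw [← Submodule.Quotient.mk_eq_zero, natCast_zsmul]
  exact hny

section LinkingPairing

variable {F G : Type*} [AddCommGroup F] [Module ℤ F] [AddCommGroup G] [Module ℤ G]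
  {γ : G →ₗ[ℤ] F} {μ : G →ₗ[ℤ] (F →ₗ[ℤ] ℤ)} {ε : ℤ}
  {x x' y y' : F →ₗ[ℤ] ℤ} {s s' : ℤ} {g g' : G}

theorem exists_zsmul_eq_of_finite_cokernel (hcok : Finite ((F →ₗ[ℤ] ℤ) ⧸ LinearMap.range μ))
    (y : F →ₗ[ℤ] ℤ) : ∃ s : ℤ, s ≠ 0 ∧ ∃ g : G, s • y = μ g := by
  obtain ⟨s, hs, g, hg⟩ := (LinearMap.range μ).exists_ne_zero_zsmul_mem_of_finite_quotient y
  exact ⟨s, hs, g, hg.symm⟩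

theorem apply_eq_mul_of_zsmul_eq (hsg : s • y = μ g) (f : F) : μ g f = s * y f := by
  rw [← hsg, LinearMap.smul_apply, smul_eq_mul]

theorem linking_eq_of_sub_mem_range_left (hsymm : ∀ g h : G, μ g (γ h) = -ε * μ h (γ g))
    (hs : s ≠ 0) (hsg : s • y = μ g) (hx : x - x' ∈ LinearMap.range μ) :
    (mk ((x (γ g) : ℚ) / s) : ℚ ⧸ AddSubgroup.zmultiples (1 : ℚ)) = mk ((x' (γ g) : ℚ) / s) := by
  obtain ⟨k, hk⟩ := hx
  have hdiff : x (γ g) - x' (γ g) = s * (-ε * y (γ k)) := by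
    rw [← LinearMap.sub_apply, ← hk, hsymm, apply_eq_mul_of_zsmul_eq hsg]
    ring
  refine mk_eq_mk_of_sub_eq_intCast (-ε * y (γ k)) ?_
  rw [← sub_div, div_eq_iff (by exact_mod_cast hs), mul_comm]
  exact_mod_cast hdiff

theorem linking_eq_of_sub_mem_range_right (hinj : Function.Injective μ)
    (hs : s ≠ 0) (hs' : s' ≠ 0) (hsg : s • y = μ g) (hs'g' : s' • y' = μ g')
    (hy : y - y' ∈ LinearMap.range μ) :
    (mk ((x (γ g) : ℚ) / s) : ℚ ⧸ AddSubgroup.zmultiples (1 : ℚ)) = mk ((x (γ g') : ℚ) / s') := by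
  obtain ⟨l, hl⟩ := hy
  have hg : s' • g = s • g' + (s * s') • l := hinj <| by
    rw [map_add, map_zsmul, map_zsmul, map_zsmul, ← hsg, ← hs'g', hl]
    module
  have hx : s' * x (γ g) = s * x (γ g') + s * s' * x (γ l) := by
    simpa only [map_add, map_zsmul, smul_eq_mul] using congrArg (fun z ↦ x (γ z)) hg
  refine mk_eq_mk_of_sub_eq_intCast (x (γ l)) ?_
  have hxq : (s' : ℚ) * x (γ g) = s * x (γ g') + s * s' * x (γ l) := by exact_mod_cast hx
  field_simp
  linear_combination hxq

theorem linking_div_symm (hsymm : ∀ g h : G, μ g (γ h) = -ε * μ h (γ g))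
    (hs : s ≠ 0) (hs' : s' ≠ 0) (hsg : s • y = μ g) (hs'g' : s' • x = μ g') :
    (x (γ g) : ℚ) / s = -ε * ((y (γ g') : ℚ) / s') := by
  have hx : s' * x (γ g) = -ε * (s * y (γ g')) := by
    rw [← apply_eq_mul_of_zsmul_eq hs'g', hsymm, apply_eq_mul_of_zsmul_eq hsg]
  have hxq : (s' : ℚ) * x (γ g) = -ε * (s * y (γ g')) := by exact_mod_cast hx
  field_simp
  linear_combination hxq

end LinkingPairing

theorem stmt_18 (ε : ℤ)
    (F G : Type) [AddCommGroup F] [Module ℤ F]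
    [AddCommGroup G] [Module ℤ G]
    (γ : G →ₗ[ℤ] F) (μ : G →ₗ[ℤ] (F →ₗ[ℤ] ℤ))
    (hsymm : ∀ g h : G, μ g (γ h) = -ε * (μ h (γ g)))
    (hinj : Function.Injective μ)
    (hcok : Finite ((F →ₗ[ℤ] ℤ) ⧸ LinearMap.range μ)) :
    -- every element of F* has a nonzero multiple in the image of μ
    (∀ y : F →ₗ[ℤ] ℤ, ∃ s : ℤ, s ≠ 0 ∧ ∃ g : G, s • y = μ g) ∧
    -- the value (1/s)·x(γ g) mod ℤ is independent of all choices of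
    -- representatives x, y and of the pair (s, g)
    (∀ (x y x' y' : F →ₗ[ℤ] ℤ) (s s' : ℤ) (g g' : G),
      s ≠ 0 → s' ≠ 0 → s • y = μ g → s' • y' = μ g' →
      x - x' ∈ LinearMap.range μ → y - y' ∈ LinearMap.range μ →
      (QuotientAddGroup.mk (((x (γ g) : ℚ)) / (s : ℚ)) :
          ℚ ⧸ AddSubgroup.zmultiples (1 : ℚ)) =
        QuotientAddGroup.mk (((x' (γ g') : ℚ)) / (s' : ℚ))) ∧
    -- (−ε)-symmetry: λ_μ([x],[y]) = −ε · λ_μ([y],[x]) in ℚ/ℤ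
    (∀ (x y : F →ₗ[ℤ] ℤ) (s t : ℤ) (g h : G),
      s ≠ 0 → t ≠ 0 → s • y = μ g → t • x = μ h →
      (QuotientAddGroup.mk (((x (γ g) : ℚ)) / (s : ℚ)) :
          ℚ ⧸ AddSubgroup.zmultiples (1 : ℚ)) =
        (-ε : ℤ) • QuotientAddGroup.mk (((y (γ h) : ℚ)) / (t : ℚ))) := by
  refine ⟨exists_zsmul_eq_of_finite_cokernel hcok, ?_, ?_⟩
  · intro x y x' y' s s' g g' hs hs' hsg hs'g' hx hy
    exact (linking_eq_of_sub_mem_range_right hinj hs hs' hsg hs'g' hy).trans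
      (linking_eq_of_sub_mem_range_left hsymm hs' hs'g' hx)
  · intro x y s t g h hs ht hsg htx
    rw [← QuotientAddGroup.mk_zsmul, linking_div_symm hsymm hs ht hsg htx, zsmul_eq_mul, Int.cast_neg]
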